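/- Let ρ > 0, ν ∈ ℝ with cos(πν) ≠ 0, and let r' ∈ EuclideanSpace ℝ (Fin 3) be nonzero. Then ‖r − r'‖ · G_ν(r, r') tends to −1/(4π) as r tends to r' (through r ≠ r'). -/

import Mathlib

/-- The three-dimensional Maxwell fish-eye Green's function. -/
noncomputable def fisheyeGreen (ρ ν : ℝ) (r r' : EuclideanSpace ℝ (Fin 3)) : ℝ :=
  -(1 / (4 * Real.pi * Real.cos (Real.pi * ν)))
    * (Real.sqrt ((‖r‖ ^ 2 + ρ ^ 2) * (‖r'‖ ^ 2 + ρ ^ 2))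
        / (‖r - r'‖
            * Real.sqrt (‖r‖ ^ 2 * ‖r'‖ ^ 2 + 2 * ρ ^ 2 * (inner ℝ r r' : ℝ) + ρ ^ 4)))
    * Real.sin ((ν + 1 / 2)
        * Real.arccos (-1 + 2 * ρ ^ 2 * ‖r - r'‖ ^ 2
            / ((‖r‖ ^ 2 + ρ ^ 2) * (‖r'‖ ^ 2 + ρ ^ 2))))

/-!
Multiplying by `‖r - r'‖` cancels the only singular factor of `G_ν`, leaving a function that is
continuous at `r = r'`. There the arccos argument is `-1`, so the sine factor becomes
`sin ((ν + 1/2) π) = cos (π ν)`, which cancels the prefactor, and the remaining square-root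
quotient is `1` because `‖r'‖⁴ + 2ρ²‖r'‖² + ρ⁴ = (‖r'‖² + ρ²)²`.
-/

open Real

section Regular

variable {E : Type*} [NormedAddCommGroup E] [InnerProductSpace ℝ E]

noncomputable def fisheyeGreenRegular (ρ ν : ℝ) (r r' : E) : ℝ :=
  -(1 / (4 * π * cos (π * ν)))
    * (√((‖r‖ ^ 2 + ρ ^ 2) * (‖r'‖ ^ 2 + ρ ^ 2))
        / √(‖r‖ ^ 2 * ‖r'‖ ^ 2 + 2 * ρ ^ 2 * inner ℝ r r' + ρ ^ 4))
    * sin ((ν + 1 / 2)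
        * arccos (-1 + 2 * ρ ^ 2 * ‖r - r'‖ ^ 2 / ((‖r‖ ^ 2 + ρ ^ 2) * (‖r'‖ ^ 2 + ρ ^ 2))))

lemma norm_sq_mul_norm_sq_add_inner_self (ρ : ℝ) (r : E) :
    ‖r‖ ^ 2 * ‖r‖ ^ 2 + 2 * ρ ^ 2 * inner ℝ r r + ρ ^ 4 = (‖r‖ ^ 2 + ρ ^ 2) ^ 2 := by
  rw [real_inner_self_eq_norm_sq]; ring

lemma fisheyeGreenRegular_self {ρ ν : ℝ} (hρ : 0 < ρ) (hν : cos (π * ν) ≠ 0) (r' : E) :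
    fisheyeGreenRegular ρ ν r' r' = -1 / (4 * π) := by
  have hpos : 0 < ‖r'‖ ^ 2 + ρ ^ 2 := by positivity
  have hsin : sin ((ν + 1 / 2) * π) = cos (π * ν) := by
    rw [← sin_add_pi_div_two]; ring_nf
  simp only [fisheyeGreenRegular, norm_sq_mul_norm_sq_add_inner_self, sub_self, norm_zero,
    sqrt_mul_self hpos.le, sqrt_sq hpos.le, div_self hpos.ne']
  norm_num [arccos_neg_one, hsin]
  field_simp

lemma continuousAt_fisheyeGreenRegular {ρ : ℝ} (hρ : 0 < ρ) (ν : ℝ) (r' : E) :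
    ContinuousAt (fun r => fisheyeGreenRegular ρ ν r r') r' := by
  have hpos : 0 < ‖r'‖ ^ 2 + ρ ^ 2 := by positivity
  have hsqrt : √(‖r'‖ ^ 2 * ‖r'‖ ^ 2 + 2 * ρ ^ 2 * inner ℝ r' r' + ρ ^ 4) ≠ 0 := by
    rw [norm_sq_mul_norm_sq_add_inner_self, sqrt_sq hpos.le]; exact hpos.ne'
  have hden : ∀ r : E, (‖r‖ ^ 2 + ρ ^ 2) * (‖r'‖ ^ 2 + ρ ^ 2) ≠ 0 := fun r => by positivity
  have hsin : Continuous fun r : E => sin ((ν + 1 / 2)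
      * arccos (-1 + 2 * ρ ^ 2 * ‖r - r'‖ ^ 2 / ((‖r‖ ^ 2 + ρ ^ 2) * (‖r'‖ ^ 2 + ρ ^ 2)))) :=
    continuous_sin.comp <| continuous_const.mul <| continuous_arccos.comp <| by
      fun_prop (disch := exact hden)
  exact (continuousAt_const.mul ((by fun_prop : ContinuousAt _ r').div (by fun_prop) hsqrt)).mul
    hsin.continuousAt

end Regular

lemma norm_sub_mul_fisheyeGreen {r r' : EuclideanSpace ℝ (Fin 3)} (h : r ≠ r') (ρ ν : ℝ) :
    ‖r - r'‖ * fisheyeGreen ρ ν r r' = fisheyeGreenRegular ρ ν r r' := by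
  have hd : ‖r - r'‖ ≠ 0 := norm_ne_zero_iff.mpr (sub_ne_zero.mpr h)
  unfold fisheyeGreen fisheyeGreenRegular
  rw [div_mul_eq_div_div_swap]
  field_simp

theorem fisheye_green_source_singularity
    (ρ ν : ℝ) (hρ : 0 < ρ) (hν : Real.cos (Real.pi * ν) ≠ 0)
    (r' : EuclideanSpace ℝ (Fin 3)) :
    Filter.Tendsto (fun r => ‖r - r'‖ * fisheyeGreen ρ ν r r')
      (nhdsWithin r' {r'}ᶜ) (nhds (-1 / (4 * Real.pi))) := by
  have hlim := (continuousAt_fisheyeGreenRegular hρ ν r').continuousWithinAt (s := {r'}ᶜ)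
  rw [ContinuousWithinAt, fisheyeGreenRegular_self hρ hν] at hlim
  refine hlim.congr' (Filter.eventuallyEq_of_mem self_mem_nhdsWithin fun r hr => ?_)
  exact (norm_sub_mul_fisheyeGreen hr ρ ν).symm
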